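/- Let k, s ≥ 1 be natural numbers, let t be a nonzero real number, and let F(z) = Σ_{n=1}^{∞} 1/(k^2·n^{4s}·(k·n^{2s}+z)). Then the series Σ_{r=1}^{∞} (−1)^r e^{πirβ}(F(r−it)−F(r+it)) and Σ_{r=1}^{∞} (−1)^r e^{−πirβ}(F(−r−it)−F(−r+it)) converge absolutely, and the convergence is uniform for β ∈ [−1,1]. -/

import Mathlib

open Filter

noncomputable def Fks (k s : ℕ) (z : ℂ) : ℂ :=
  ∑' n : ℕ, 1 / ((k : ℂ) ^ 2 * ((n : ℂ) + 1) ^ (4 * s) *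
    ((k : ℂ) * ((n : ℂ) + 1) ^ (2 * s) + z))

/-!
Write `F(z) = Σₙ 1/(aₙ(cₙ + z))` with `aₙ = k²n^{4s}` and integers `cₙ = kn^{2s}`. For real `w`,
`F(w - it) - F(w + it) = Σₙ 2it/(aₙ((cₙ + w)² + t²))`, and the factors `(-1)^r e^{±πirβ}` have
modulus one, so the `r`-th term of either series is bounded, uniformly in `β`, by
`M(±r) = Σₙ 2|t|/(aₙ((cₙ ± r)² + t²))`. Summing over `r` first, `cₙ ± r` runs injectively
through `ℤ`, so `Σᵣ M(±r) ≤ (Σⱼ 2|t|/(j² + t²)) · Σₙ 1/aₙ < ∞` (nonnegative double series, `s ≥ 1`).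
The Weierstrass M-test concludes.
-/

open Complex

theorem norm_inv_sub_inv_conj (x t : ℝ) :
    ‖((x : ℂ) - I * t)⁻¹ - ((x : ℂ) + I * t)⁻¹‖ = 2 * |t| / (x ^ 2 + t ^ 2) := by
  have hsub : normSq ((x : ℂ) - I * t) = x ^ 2 + t ^ 2 := by simp [normSq_apply]; ring
  have hadd : normSq ((x : ℂ) + I * t) = x ^ 2 + t ^ 2 := by simp [normSq_apply]; ring
  have h : ((x : ℂ) - I * t)⁻¹ - ((x : ℂ) + I * t)⁻¹ = 2 * t * I * ((x ^ 2 + t ^ 2 : ℝ) : ℂ)⁻¹ := by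
    rw [inv_def, inv_def, hsub, hadd]
    simp only [map_sub, map_add, map_mul, conj_ofReal, conj_I, ofReal_inv]
    ring
  rw [h, norm_mul, norm_mul, norm_inv, norm_real, Real.norm_of_nonneg (by positivity)]
  simp [div_eq_mul_inv]

theorem summable_inv_int_sq_add_sq (t : ℝ) : Summable fun j : ℤ => ((j : ℝ) ^ 2 + t ^ 2)⁻¹ := by
  refine Summable.of_norm_bounded_eventually (Real.summable_one_div_int_pow.2 one_lt_two) ?_
  filter_upwards [(Set.finite_singleton (0 : ℤ)).compl_mem_cofinite] with j hj
  have hj : (j : ℝ) ≠ 0 := by simpa using hj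
  rw [Real.norm_of_nonneg (by positivity), one_div]
  exact inv_anti₀ (by positivity) (by nlinarith)

theorem norm_neg_one_pow_mul_exp_mul (n : ℕ) {w : ℂ} (hw : w.re = 0) (z : ℂ) :
    ‖(-1 : ℂ) ^ n * exp w * z‖ = ‖z‖ := by
  simp [norm_exp, hw]

theorem summable_inv_mul_add_one_pow (C : ℝ) {p : ℕ} (hp : 1 < p) :
    Summable fun n : ℕ => (C * ((n : ℝ) + 1) ^ p)⁻¹ := by
  simp_rw [mul_inv]
  refine ((summable_nat_add_iff 1).2 (Real.summable_nat_pow_inv.2 hp)).mul_left C⁻¹ |>.congr ?_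
  intro n; push_cast; rfl

noncomputable def poleSum (a b : ℕ → ℝ) (z : ℂ) : ℂ :=
  ∑' n, ((a n : ℂ) * (b n + z))⁻¹

noncomputable def poleSumMajorant (a b : ℕ → ℝ) (t w : ℝ) : ℝ :=
  ∑' n, 2 * |t| / (a n * ((b n + w) ^ 2 + t ^ 2))

section

variable {a : ℕ → ℝ} (b : ℕ → ℝ)

theorem summable_norm_poleSum_term (ha : Summable fun n => (a n)⁻¹) {z : ℂ} (hz : z.im ≠ 0) :
    Summable fun n => ‖((a n : ℂ) * (b n + z))⁻¹‖ := by
  refine (ha.abs.mul_right |z.im|⁻¹).of_nonneg_of_le (fun _ => norm_nonneg _) fun n => ?_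
  rw [mul_inv, norm_mul, norm_inv, norm_inv, norm_real, Real.norm_eq_abs, abs_inv]
  refine mul_le_mul_of_nonneg_left (inv_anti₀ (abs_pos.2 hz) ?_) (by positivity)
  simpa using abs_im_le_norm ((b n : ℂ) + z)

theorem norm_poleSum_sub_le (ha₀ : ∀ n, 0 ≤ a n) (ha : Summable fun n => (a n)⁻¹) (t w : ℝ) :
    ‖poleSum a b (w - I * t) - poleSum a b (w + I * t)‖ ≤ poleSumMajorant a b t w := by
  rcases eq_or_ne t 0 with rfl | ht
  · simp [poleSumMajorant]
  have hsub := summable_norm_poleSum_term b ha (z := w - I * t) (by simpa using ht)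
  have hadd := summable_norm_poleSum_term b ha (z := w + I * t) (by simpa using ht)
  have hterm : ∀ n, ‖((a n : ℂ) * (b n + (w - I * t)))⁻¹ - ((a n : ℂ) * (b n + (w + I * t)))⁻¹‖
      = 2 * |t| / (a n * ((b n + w) ^ 2 + t ^ 2)) := fun n => by
    rw [mul_inv, mul_inv, ← mul_sub, norm_mul, norm_inv, norm_real, Real.norm_of_nonneg (ha₀ n),
      ← add_sub_assoc, ← add_assoc, ← ofReal_add, norm_inv_sub_inv_conj,
      inv_mul_eq_div, div_div, mul_comm (_ ^ 2 + _)]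
  calc ‖poleSum a b (w - I * t) - poleSum a b (w + I * t)‖
      = ‖∑' n, (((a n : ℂ) * (b n + (w - I * t)))⁻¹ - ((a n : ℂ) * (b n + (w + I * t)))⁻¹)‖ := by
        rw [poleSum, poleSum, (hsub.of_norm).tsum_sub hadd.of_norm]
    _ ≤ ∑' n, ‖((a n : ℂ) * (b n + (w - I * t)))⁻¹ - ((a n : ℂ) * (b n + (w + I * t)))⁻¹‖ :=
        norm_tsum_le_tsum_norm <| (hsub.add hadd).of_nonneg_of_le (fun _ => norm_nonneg _)
          fun _ => norm_sub_le _ _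
    _ = poleSumMajorant a b t w := tsum_congr hterm

end

theorem summable_poleSumMajorant_int {a : ℕ → ℝ} (ha₀ : ∀ n, 0 ≤ a n)
    (ha : Summable fun n => (a n)⁻¹) (c : ℕ → ℤ) (t : ℝ) :
    Summable fun m : ℤ => poleSumMajorant a (fun n => c n) t m := by
  set f : ℕ × ℤ → ℝ := fun p => 2 * |t| / (a p.1 * (((c p.1 : ℝ) + p.2) ^ 2 + t ^ 2))
  have hf₀ : 0 ≤ f := fun p => by have := ha₀ p.1; positivity
  have hrow : ∀ n, (fun m => f (n, m)) =
      fun m => 2 * |t| * (a n)⁻¹ * (((Equiv.addLeft (c n) m : ℤ) : ℝ) ^ 2 + t ^ 2)⁻¹ := fun n => by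
    ext m; simp only [f, Equiv.coe_addLeft, Int.cast_add, div_eq_mul_inv, mul_inv]; ring
  have hf : Summable f := by
    refine (summable_prod_of_nonneg hf₀).2 ⟨fun n => ?_, ?_⟩
    · rw [hrow]
      exact ((Equiv.addLeft (c n)).summable_iff.2 (summable_inv_int_sq_add_sq t)).mul_left _
    · simp_rw [hrow, tsum_mul_left, (Equiv.addLeft _).tsum_eq (fun j : ℤ => ((j : ℝ) ^ 2 + t ^ 2)⁻¹)]
      exact (ha.mul_left _).mul_right _
  exact hf.prod_symm.prod

theorem Fks_eq_poleSum (k s : ℕ) :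
    Fks k s = poleSum (fun n => (k : ℝ) ^ 2 * ((n : ℝ) + 1) ^ (4 * s))
      (fun n => ((k * (n + 1) ^ (2 * s) : ℤ) : ℝ)) := by
  ext z
  simp [Fks, poleSum]

theorem statement5_general (k s : ℕ) (hs : 1 ≤ s) (t : ℝ) :
    (∀ β ∈ Set.Icc (-1 : ℝ) 1, Summable (fun r : ℕ =>
      ‖(-1 : ℂ) ^ (r + 1) * Complex.exp (Real.pi * Complex.I * ((r : ℂ) + 1) * (β : ℂ)) *
        (Fks k s (((r : ℂ) + 1) - Complex.I * (t : ℂ))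
          - Fks k s (((r : ℂ) + 1) + Complex.I * (t : ℂ)))‖)) ∧
    (∀ β ∈ Set.Icc (-1 : ℝ) 1, Summable (fun r : ℕ =>
      ‖(-1 : ℂ) ^ (r + 1) * Complex.exp (-(Real.pi * Complex.I * ((r : ℂ) + 1) * (β : ℂ))) *
        (Fks k s (-((r : ℂ) + 1) - Complex.I * (t : ℂ))
          - Fks k s (-((r : ℂ) + 1) + Complex.I * (t : ℂ)))‖)) ∧
    TendstoUniformlyOn
      (fun n : ℕ => fun β : ℝ => ∑ r ∈ Finset.range n,
        (-1 : ℂ) ^ (r + 1) * Complex.exp (Real.pi * Complex.I * ((r : ℂ) + 1) * (β : ℂ)) *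
          (Fks k s (((r : ℂ) + 1) - Complex.I * (t : ℂ))
            - Fks k s (((r : ℂ) + 1) + Complex.I * (t : ℂ))))
      (fun β : ℝ => ∑' r : ℕ,
        (-1 : ℂ) ^ (r + 1) * Complex.exp (Real.pi * Complex.I * ((r : ℂ) + 1) * (β : ℂ)) *
          (Fks k s (((r : ℂ) + 1) - Complex.I * (t : ℂ))
            - Fks k s (((r : ℂ) + 1) + Complex.I * (t : ℂ))))
      atTop (Set.Icc (-1 : ℝ) 1) ∧
    TendstoUniformlyOn
      (fun n : ℕ => fun β : ℝ => ∑ r ∈ Finset.range n,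
        (-1 : ℂ) ^ (r + 1) * Complex.exp (-(Real.pi * Complex.I * ((r : ℂ) + 1) * (β : ℂ))) *
          (Fks k s (-((r : ℂ) + 1) - Complex.I * (t : ℂ))
            - Fks k s (-((r : ℂ) + 1) + Complex.I * (t : ℂ))))
      (fun β : ℝ => ∑' r : ℕ,
        (-1 : ℂ) ^ (r + 1) * Complex.exp (-(Real.pi * Complex.I * ((r : ℂ) + 1) * (β : ℂ))) *
          (Fks k s (-((r : ℂ) + 1) - Complex.I * (t : ℂ))
            - Fks k s (-((r : ℂ) + 1) + Complex.I * (t : ℂ))))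
      atTop (Set.Icc (-1 : ℝ) 1) := by
  obtain ⟨a, c, ha₀, ha, hF⟩ : ∃ (a : ℕ → ℝ) (c : ℕ → ℤ), (∀ n, 0 ≤ a n) ∧
      Summable (fun n => (a n)⁻¹) ∧ Fks k s = poleSum a (fun n => c n) :=
    ⟨_, _, fun n => by positivity, summable_inv_mul_add_one_pow _ (by omega), Fks_eq_poleSum k s⟩
  have hM := summable_poleSumMajorant_int ha₀ ha c t
  have hMpos : Summable fun r : ℕ => poleSumMajorant a (fun n => c n) t (r + 1) :=
    (hM.comp_injective (i := fun r : ℕ => (r + 1 : ℤ)) fun _ _ h => by simpa using h).congr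
      fun r => by simp
  have hMneg : Summable fun r : ℕ => poleSumMajorant a (fun n => c n) t (-(r + 1)) :=
    (hM.comp_injective (i := fun r : ℕ => (-(r + 1) : ℤ)) fun _ _ h => by simpa using h).congr
      fun r => by simp
  have hbpos : ∀ (r : ℕ) (β : ℝ), ‖(-1 : ℂ) ^ (r + 1) * exp (Real.pi * I * ((r : ℂ) + 1) * β) *
      (Fks k s ((r : ℂ) + 1 - I * t) - Fks k s ((r : ℂ) + 1 + I * t))‖ ≤
        poleSumMajorant a (fun n => c n) t (r + 1) := fun r β => by
    rw [norm_neg_one_pow_mul_exp_mul _ (by simp), hF]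
    exact_mod_cast norm_poleSum_sub_le _ ha₀ ha t (r + 1)
  have hbneg : ∀ (r : ℕ) (β : ℝ), ‖(-1 : ℂ) ^ (r + 1) * exp (-(Real.pi * I * ((r : ℂ) + 1) * β)) *
      (Fks k s (-((r : ℂ) + 1) - I * t) - Fks k s (-((r : ℂ) + 1) + I * t))‖ ≤
        poleSumMajorant a (fun n => c n) t (-(r + 1)) := fun r β => by
    rw [norm_neg_one_pow_mul_exp_mul _ (by simp), hF]
    exact_mod_cast norm_poleSum_sub_le _ ha₀ ha t (-(r + 1))
  exact ⟨fun β _ => hMpos.of_nonneg_of_le (fun _ => norm_nonneg _) (hbpos · β),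
    fun β _ => hMneg.of_nonneg_of_le (fun _ => norm_nonneg _) (hbneg · β),
    tendstoUniformlyOn_tsum_nat hMpos fun r β _ => hbpos r β,
    tendstoUniformlyOn_tsum_nat hMneg fun r β _ => hbneg r β⟩

/-- Lemma 10 of the paper. -/
theorem statement5 (k s : ℕ) (hk : 1 ≤ k) (hs : 1 ≤ s) (t : ℝ) (ht : t ≠ 0) :
    (∀ β ∈ Set.Icc (-1 : ℝ) 1, Summable (fun r : ℕ =>
      ‖(-1 : ℂ) ^ (r + 1) * Complex.exp (Real.pi * Complex.I * ((r : ℂ) + 1) * (β : ℂ)) *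
        (Fks k s (((r : ℂ) + 1) - Complex.I * (t : ℂ))
          - Fks k s (((r : ℂ) + 1) + Complex.I * (t : ℂ)))‖)) ∧
    (∀ β ∈ Set.Icc (-1 : ℝ) 1, Summable (fun r : ℕ =>
      ‖(-1 : ℂ) ^ (r + 1) * Complex.exp (-(Real.pi * Complex.I * ((r : ℂ) + 1) * (β : ℂ))) *
        (Fks k s (-((r : ℂ) + 1) - Complex.I * (t : ℂ))
          - Fks k s (-((r : ℂ) + 1) + Complex.I * (t : ℂ)))‖)) ∧
    TendstoUniformlyOn
      (fun n : ℕ => fun β : ℝ => ∑ r ∈ Finset.range n,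
        (-1 : ℂ) ^ (r + 1) * Complex.exp (Real.pi * Complex.I * ((r : ℂ) + 1) * (β : ℂ)) *
          (Fks k s (((r : ℂ) + 1) - Complex.I * (t : ℂ))
            - Fks k s (((r : ℂ) + 1) + Complex.I * (t : ℂ))))
      (fun β : ℝ => ∑' r : ℕ,
        (-1 : ℂ) ^ (r + 1) * Complex.exp (Real.pi * Complex.I * ((r : ℂ) + 1) * (β : ℂ)) *
          (Fks k s (((r : ℂ) + 1) - Complex.I * (t : ℂ))
            - Fks k s (((r : ℂ) + 1) + Complex.I * (t : ℂ))))
      atTop (Set.Icc (-1 : ℝ) 1) ∧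
    TendstoUniformlyOn
      (fun n : ℕ => fun β : ℝ => ∑ r ∈ Finset.range n,
        (-1 : ℂ) ^ (r + 1) * Complex.exp (-(Real.pi * Complex.I * ((r : ℂ) + 1) * (β : ℂ))) *
          (Fks k s (-((r : ℂ) + 1) - Complex.I * (t : ℂ))
            - Fks k s (-((r : ℂ) + 1) + Complex.I * (t : ℂ))))
      (fun β : ℝ => ∑' r : ℕ,
        (-1 : ℂ) ^ (r + 1) * Complex.exp (-(Real.pi * Complex.I * ((r : ℂ) + 1) * (β : ℂ))) *
          (Fks k s (-((r : ℂ) + 1) - Complex.I * (t : ℂ))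
            - Fks k s (-((r : ℂ) + 1) + Complex.I * (t : ℂ))))
      atTop (Set.Icc (-1 : ℝ) 1) :=
  statement5_general k s hs t
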